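/- Let A be a real m×n matrix with m ≤ n and rank(A) = m, let b ∈ ℝ^m (the system Ax = b is then consistent), and let x_LS denote the minimal Euclidean norm solution of Ax = b. Let x^0 ∈ ℝ^n and let (x^k)_{k≥0} be generated by the Maximal Residual Kaczmarz (MRK) algorithm: at step k choose an index i_k ∈ {1,…,m} maximizing |⟨A_i, x^k⟩ − b_i| over i ∈ {1,…,m}, and set x^{k+1} = x^k − ((⟨A_{i_k}, x^k⟩ − b_{i_k})/‖A_{i_k}‖²) A_{i_k}. Assume (as is known for consistent systems) that x^k converges to P_{N(A)}(x^0) + x_LS, where P_{N(A)} is the orthogonal projection onto the null space of A. If P_{R(A^T)}(x^0) − x_LS = Σ_{i=1}^m γ_i A_i with γ_i > 0 for every i = 1,…,m, where P_{R(A^T)} is the orthogonal projection onto the row space of A, then for every i ∈ {1,…,m} there exists k ≥ 0 with i_k = i, i.e., every row index is selected at least once during the MRK iterations. -/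

import Mathlib

/-!
If row `i` were never selected, linear independence gives a vector `v` orthogonal to every other
row with `⟪v, A i⟫ ≠ 0`. Every Kaczmarz step moves along a row `A j` with `j ≠ i`, so `⟪v, x k⟫`
never changes; passing to the limit gives `⟪v, P_{R(Aᵀ)}(x 0) - xLS⟫ = 0`, whereas this inner
product is `γ i * ⟪v, A i⟫ ≠ 0`.
-/

open scoped RealInnerProductSpace

variable {E : Type*} [NormedAddCommGroup E] [InnerProductSpace ℝ E]

theorem LinearIndependent.exists_inner_eq_zero_of_ne {ι : Type*} [Finite ι] {A : ι → E}
    (hA : LinearIndependent ℝ A) (i : ι) :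
    ∃ v : E, (∀ j, j ≠ i → ⟪v, A j⟫ = 0) ∧ ⟪v, A i⟫ ≠ 0 := by
  set T := Submodule.span ℝ (A '' {i}ᶜ)
  have : FiniteDimensional ℝ T := FiniteDimensional.span_of_finite ℝ ((Set.toFinite _).image A)
  have hAi : A i ∉ Tᗮᗮ := by
    rw [Submodule.orthogonal_orthogonal]
    exact hA.notMem_span_image (by simp)
  rw [Submodule.mem_orthogonal] at hAi
  push Not at hAi
  obtain ⟨v, hvT, hvAi⟩ := hAi
  refine ⟨v, fun j hj => ?_, hvAi⟩
  exact Submodule.inner_left_of_mem_orthogonal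
    (Submodule.subset_span (Set.mem_image_of_mem A hj)) hvT

theorem inner_eq_inner_zero_of_orthogonal_steps {x a : ℕ → E} {c : ℕ → ℝ}
    (hstep : ∀ k, x (k + 1) = x k - c k • a k) {v : E} (hv : ∀ k, ⟪v, a k⟫ = 0) (k : ℕ) :
    ⟪v, x k⟫ = ⟪v, x 0⟫ := by
  induction k with
  | zero => rfl
  | succ k ih => rw [hstep, inner_sub_right, inner_smul_right, hv, mul_zero, sub_zero, ih]

theorem inner_sum_smul_eq_of_orthogonal {ι : Type*} [Fintype ι] [DecidableEq ι] {A : ι → E}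
    {v : E} {i : ι} (hv : ∀ j, j ≠ i → ⟪v, A j⟫ = 0) (γ : ι → ℝ) :
    ⟪v, ∑ j, γ j • A j⟫ = γ i * ⟪v, A i⟫ := by
  rw [inner_sum, Finset.sum_eq_single i (fun j _ hj => by rw [inner_smul_right, hv j hj, mul_zero])
    (by simp), inner_smul_right]

theorem mrk_selects_every_index_general
    (m n : ℕ)
    (A : Fin m → EuclideanSpace ℝ (Fin n)) (b : Fin m → ℝ)
    (hrank : LinearIndependent ℝ A)
    (xLS : EuclideanSpace ℝ (Fin n))
    (x : ℕ → EuclideanSpace ℝ (Fin n)) (ι : ℕ → Fin m)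
    (hstep : ∀ k, x (k + 1) =
      x k - ((⟪A (ι k), x k⟫ - b (ι k)) / ‖A (ι k)‖ ^ 2) • A (ι k))
    (hconv : Filter.Tendsto x Filter.atTop
      (nhds (((Submodule.orthogonalProjectionOnto (Submodule.span ℝ (Set.range A))ᗮ (x 0) :
          EuclideanSpace ℝ (Fin n))) + xLS)))
    (γ : Fin m → ℝ) (hγpos : ∀ i, 0 < γ i)
    (hγ : (Submodule.orthogonalProjectionOnto (Submodule.span ℝ (Set.range A)) (x 0) :
        EuclideanSpace ℝ (Fin n)) - xLS = ∑ i, γ i • A i) :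
    ∀ i : Fin m, ∃ k : ℕ, ι k = i := by
  intro i
  by_contra! hmissed
  obtain ⟨v, hvA, hvAi⟩ := hrank.exists_inner_eq_zero_of_ne i
  set S := Submodule.span ℝ (Set.range A)
  have hinv := inner_eq_inner_zero_of_orthogonal_steps hstep fun k => hvA _ (hmissed k)
  have hlim : ⟪v, x 0⟫ = ⟪v, Sᗮ.starProjection (x 0) + xLS⟫ :=
    tendsto_nhds_unique (by simp only [hinv, tendsto_const_nhds_iff])
      (tendsto_const_nhds.inner hconv)
  have hsplit := congrArg (⟪v, ·⟫) (S.starProjection_add_starProjection_orthogonal (x 0))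
  have hγi : γ i * ⟪v, A i⟫ = 0 := by
    rw [← inner_sum_smul_eq_of_orthogonal hvA, ← hγ, inner_sub_right]
    simp only [inner_add_right] at hlim hsplit
    rw [← Submodule.starProjection_apply]
    linarith
  exact hvAi ((mul_eq_zero.mp hγi).resolve_left (hγpos i).ne')

/-- For an underdetermined full row rank system `Ax = b` (rows
`A i` linearly independent, `m ≤ n`), let `xLS` be the minimal Euclidean norm
solution, let `(x k)` be the Maximal Residual Kaczmarz iterates with selected
indices `ι k`, and assume the known convergence `x k → P_{N(A)}(x 0) + xLS`.
If `P_{R(Aᵀ)}(x 0) - xLS = ∑ γ i • A i` with all `γ i > 0`, then every row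
index is selected at least once. -/
theorem mrk_selects_every_index
    (m n : ℕ) (hmn : m ≤ n)
    (A : Fin m → EuclideanSpace ℝ (Fin n)) (b : Fin m → ℝ)
    (hrank : LinearIndependent ℝ A)
    (xLS : EuclideanSpace ℝ (Fin n))
    (hxLS_sol : ∀ i, ⟪A i, xLS⟫ = b i)
    (hxLS_min : ∀ z : EuclideanSpace ℝ (Fin n),
      (∀ i, ⟪A i, z⟫ = b i) → ‖xLS‖ ≤ ‖z‖)
    (x : ℕ → EuclideanSpace ℝ (Fin n)) (ι : ℕ → Fin m)
    (hmax : ∀ k i, |⟪A i, x k⟫ - b i| ≤ |⟪A (ι k), x k⟫ - b (ι k)|)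
    (hstep : ∀ k, x (k + 1) =
      x k - ((⟪A (ι k), x k⟫ - b (ι k)) / ‖A (ι k)‖ ^ 2) • A (ι k))
    (hconv : Filter.Tendsto x Filter.atTop
      (nhds (((Submodule.orthogonalProjectionOnto (Submodule.span ℝ (Set.range A))ᗮ (x 0) :
          EuclideanSpace ℝ (Fin n))) + xLS)))
    (γ : Fin m → ℝ) (hγpos : ∀ i, 0 < γ i)
    (hγ : (Submodule.orthogonalProjectionOnto (Submodule.span ℝ (Set.range A)) (x 0) :
        EuclideanSpace ℝ (Fin n)) - xLS = ∑ i, γ i • A i) :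
    ∀ i : Fin m, ∃ k : ℕ, ι k = i :=
  mrk_selects_every_index_general m n A b hrank xLS x ι hstep hconv γ hγpos hγ
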